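/- arXiv:1201.4493 — 5 statements merged into one kernel-verified Lean document; each statement's English description precedes it below -/
import Mathlib

section
/- The reduced form of a sign sequence is well-defined: for any sequence t ∈ {+,-}^n, the process of repeatedly replacing a pair (t_a, t_b) = (-, +) with a < b and all entries strictly between a and b equal to 0 by (0,0) terminates, and the resulting sequence (in which no + appears to the right of a -, ignoring 0's) is independent of the order in which such replacements are performed. -/
/-- One reduction step: pick indices `a < b` with `t a = -` (encoded `some false`),
`t b = +` (encoded `some true`), all entries strictly between equal to `0`
(encoded `none`), and replace the entries at `a` and `b` by `0`. -/
def Step {n : ℕ} (t t' : Fin n → Option Bool) : Prop :=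
  ∃ a b : Fin n, a < b ∧ t a = some false ∧ t b = some true ∧
    (∀ i : Fin n, a < i → i < b → t i = none) ∧
    t' = Function.update (Function.update t a none) b none

/-- A sequence is reduced if no `+` appears to the right of a `-` (ignoring `0`'s);
equivalently, no reduction step applies. -/
def Reduced {n : ℕ} (t : Fin n → Option Bool) : Prop :=
  ∀ a b : Fin n, a < b → t a = some false → t b ≠ some true

/-!
Every step turns two nonzero entries into `0`, so the number of nonzero entries strictly
decreases and reduction terminates. A redex `(a, b)` is determined by either endpoint, since
the entries strictly between are `0`; hence two different redexes occupy four distinct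
positions, the two steps commute, and `Relation.church_rosser` makes any two reduced sequences
reachable from `t` equal. Finally a sequence admits no step exactly when it is reduced: a `-`
left of a `+` with a nonzero entry between them yields a closer such pair.
-/

namespace SignSequence

open Function Relation

variable {n : ℕ} {t t₁ t₂ : Fin n → Option Bool} {a b c d : Fin n}

def zeroPair (t : Fin n → Option Bool) (a b : Fin n) : Fin n → Option Bool :=
  update (update t a none) b none

def IsRedex (t : Fin n → Option Bool) (a b : Fin n) : Prop :=
  a < b ∧ t a = some false ∧ t b = some true ∧ ∀ i, a < i → i < b → t i = none

theorem step_iff : Step t t₁ ↔ ∃ a b, IsRedex t a b ∧ t₁ = zeroPair t a b := by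
  simp only [Step, IsRedex, zeroPair, and_assoc]

theorem IsRedex.step (h : IsRedex t a b) : Step t (zeroPair t a b) :=
  step_iff.2 ⟨a, b, h, rfl⟩

theorem zeroPair_apply_of_ne {i : Fin n} (ha : i ≠ a) (hb : i ≠ b) : zeroPair t a b i = t i := by
  simp [zeroPair, update_of_ne, ha, hb]

theorem zeroPair_apply_of_eq_none {i : Fin n} (h : t i = none) : zeroPair t a b i = none := by
  simp only [zeroPair, update_apply]
  split_ifs <;> simp_all

theorem zeroPair_apply_left : zeroPair t a b a = none := by
  simp only [zeroPair, update_apply]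
  split_ifs <;> rfl

theorem update_update_comm_const {α β : Type*} [DecidableEq α] (f : α → β) (a b : α) (v : β) :
    update (update f a v) b v = update (update f b v) a v := by
  rcases eq_or_ne a b with rfl | hab
  · rfl
  · exact update_comm hab v v f

theorem zeroPair_comm (t : Fin n → Option Bool) (a b c d : Fin n) :
    zeroPair (zeroPair t a b) c d = zeroPair (zeroPair t c d) a b := by
  simp only [zeroPair]
  rw [update_update_comm_const _ b c, update_update_comm_const _ a c,
    update_update_comm_const _ b d, update_update_comm_const _ a d]

theorem IsRedex.right_unique (h : IsRedex t a b) (h' : IsRedex t a d) : b = d := by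
  by_contra hne
  rcases lt_or_gt_of_ne hne with hbd | hdb
  · simpa [h.2.2.1] using h'.2.2.2 b h.1 hbd
  · simpa [h'.2.2.1] using h.2.2.2 d h'.1 hdb

theorem IsRedex.left_unique (h : IsRedex t a b) (h' : IsRedex t c b) : a = c := by
  by_contra hne
  rcases lt_or_gt_of_ne hne with hac | hca
  · simpa [h'.2.1] using h.2.2.2 c hac h'.1
  · simpa [h.2.1] using h'.2.2.2 a hca h.1

theorem IsRedex.ne_right_of_isRedex (h : IsRedex t a b) (h' : IsRedex t c d) : a ≠ d := by
  rintro rfl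
  simpa [h.2.1] using h'.2.2.1

theorem IsRedex.zeroPair (h : IsRedex t a b) (hac : a ≠ c) (had : a ≠ d) (hbc : b ≠ c)
    (hbd : b ≠ d) : IsRedex (zeroPair t c d) a b := by
  obtain ⟨hab, ha, hb, hbetween⟩ := h
  refine ⟨hab, ?_, ?_, fun i hai hib => zeroPair_apply_of_eq_none (hbetween i hai hib)⟩
  · rwa [zeroPair_apply_of_ne hac had]
  · rwa [zeroPair_apply_of_ne hbc hbd]

theorem step_diamond (h₁ : Step t t₁) (h₂ : Step t t₂) :
    ∃ u, ReflGen Step t₁ u ∧ ReflTransGen Step t₂ u := by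
  obtain ⟨a, b, hr, rfl⟩ := step_iff.1 h₁
  obtain ⟨c, d, hr', rfl⟩ := step_iff.1 h₂
  by_cases hac : a = c
  · subst hac
    obtain rfl := hr.right_unique hr'
    exact ⟨_, .refl, .refl⟩
  have hbd : b ≠ d := fun hbd => hac (hr.left_unique (hbd ▸ hr'))
  have had := hr.ne_right_of_isRedex hr'
  have hbc := (hr'.ne_right_of_isRedex hr).symm
  refine ⟨zeroPair (zeroPair t a b) c d, .single ?_, .single ?_⟩
  · exact (hr'.zeroPair (Ne.symm hac) (Ne.symm hbc) (Ne.symm had) (Ne.symm hbd)).step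
  · rw [zeroPair_comm]
    exact (hr.zeroPair hac had hbc hbd).step

def weight (t : Fin n → Option Bool) : ℕ :=
  (Finset.univ.filter fun i => t i ≠ none).card

theorem Step.weight_lt (h : Step t t₁) : weight t₁ < weight t := by
  obtain ⟨a, b, hr, rfl⟩ := step_iff.1 h
  unfold weight
  refine Finset.card_lt_card ((Finset.ssubset_iff_of_subset ?_).2 ⟨a, ?_, ?_⟩)
  · intro i
    simp only [Finset.mem_filter, Finset.mem_univ, true_and]
    exact mt zeroPair_apply_of_eq_none
  · simp [hr.2.1]
  · simp [zeroPair_apply_left]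

theorem wellFounded_flip_step : WellFounded (flip (@Step n)) :=
  Subrelation.wf (fun h => Step.weight_lt h) (measure weight).wf

theorem exists_step_of_lt {i j : Fin n} (hij : i < j) (hi : t i = some false)
    (hj : t j = some true) : ∃ t₁, Step t t₁ := by
  by_cases hbetween : ∀ k, i < k → k < j → t k = none
  · exact ⟨_, IsRedex.step ⟨hij, hi, hj, hbetween⟩⟩
  push Not at hbetween
  obtain ⟨k, hik, hkj, hk⟩ := hbetween
  obtain ⟨_ | _, hk⟩ := Option.ne_none_iff_exists'.mp hk
  · exact exists_step_of_lt hkj hk hj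
  · exact exists_step_of_lt hik hi hk
termination_by (j : ℕ) - i
decreasing_by all_goals simp only [Fin.lt_def] at *; omega

theorem reduced_iff_forall_not_step : Reduced t ↔ ∀ t₁, ¬ Step t t₁ := by
  refine ⟨fun h t₁ hs => ?_, fun h a b hab ha hb => ?_⟩
  · obtain ⟨a, b, ⟨hab, ha, hb, -⟩, -⟩ := step_iff.1 hs
    exact h a b hab ha hb
  · obtain ⟨t₁, hs⟩ := exists_step_of_lt hab ha hb
    exact h t₁ hs

theorem exists_reduced (t : Fin n → Option Bool) : ∃ r, ReflTransGen Step t r ∧ Reduced r := by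
  obtain ⟨r, hr, hmin⟩ := wellFounded_flip_step.has_min {r | ReflTransGen Step t r} ⟨t, .refl⟩
  exact ⟨r, hr, reduced_iff_forall_not_step.2 fun t₁ hs => hmin t₁ (hr.tail hs) hs⟩

theorem eq_of_reflTransGen_of_reduced {r : Fin n → Option Bool} (h : Reduced r)
    (hr : ReflTransGen Step r t) : t = r := by
  rcases hr.cases_head with rfl | ⟨t₁, hs, -⟩
  · rfl
  · exact absurd hs (reduced_iff_forall_not_step.1 h t₁)

theorem reduced_unique {r r' : Fin n → Option Bool} (hr : ReflTransGen Step t r)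
    (hr' : ReflTransGen Step t r') (hred : Reduced r) (hred' : Reduced r') : r = r' := by
  obtain ⟨u, hu, hu'⟩ := church_rosser (fun _ _ _ => step_diamond) hr hr'
  rw [← eq_of_reflTransGen_of_reduced hred hu, ← eq_of_reflTransGen_of_reduced hred' hu']

end SignSequence

/-- The reduction process on a sign sequence `t ∈ {+,-}ⁿ` terminates (there is no
infinite chain of reduction steps starting at `t`) and the resulting reduced
sequence is independent of the order of the replacements: there is a unique
reduced sequence reachable from `t`. -/
theorem reduced_form_well_defined (n : ℕ) (t : Fin n → Bool) :
    (¬ ∃ f : ℕ → (Fin n → Option Bool),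
        (f 0 = fun i => some (t i)) ∧ ∀ k, Step (f k) (f (k + 1))) ∧
    (∃! r : Fin n → Option Bool,
        Relation.ReflTransGen Step (fun i => some (t i)) r ∧ Reduced r) := by
  refine ⟨fun ⟨f, _, hf⟩ => ?_, ?_⟩
  · exact (wellFounded_iff_isEmpty_descending_chain.1 SignSequence.wellFounded_flip_step).false
      ⟨f, hf⟩
  · obtain ⟨r, hr, hred⟩ := SignSequence.exists_reduced fun i => some (t i)
    exact ⟨r, ⟨hr, hred⟩, fun r' ⟨hr', hred'⟩ => SignSequence.reduced_unique hr' hr hred' hred⟩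
end

section
/- Let t ∈ {+,-}^n and suppose ẽt ≠ 0, with i the largest index such that t^red_i = +. Then the reduced form of ẽt agrees with t^red except that position i changes from + to -; consequently h₊(ẽt) = h₊(t) - 1 and h₋(ẽt) = h₋(t) + 1. -/
-- Signs: `true` encodes `+`, `false` encodes `-`.  In reduced forms, `none` encodes `0`.

/-- Replace the first surviving `+` (i.e. first `some true`) by `0` (i.e. `none`). -/
def zapPlus : List (Option Bool) → List (Option Bool)
  | [] => []
  | some true :: r => none :: r
  | y :: r => y :: zapPlus r

/-- The reduced form `t^red` of a sign sequence `t ∈ {+,-}ⁿ`: repeatedly cancel pairs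
`(t_a, t_b) = (-, +)` with `a < b` and only `0`'s strictly in between, replacing both
entries by `0`, until no `+` appears to the right of a `-`. -/
def red : List Bool → List (Option Bool)
  | [] => []
  | x :: s =>
    let r := red s
    if x then some true :: r
    else if r.any (· == some true) then none :: zapPlus r
    else some false :: r

/-- `h₊(t)`: the number of `+`'s in the reduced form of `t`. -/
def hp (t : List Bool) : ℕ := (red t).count (some true)

/-- `h₋(t)`: the number of `-`'s in the reduced form of `t`. -/
def hm (t : List Bool) : ℕ := (red t).count (some false)

/-- The weight `wt(t) = h₋(t) - h₊(t)`. -/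
def wt (t : List Bool) : ℤ := (hm t : ℤ) - (hp t : ℤ)

/-- The largest index `i` with `t^red_i = +`, if it exists. -/
def eIdx (t : List Bool) : Option ℕ :=
  ((List.range t.length).filter (fun i => (red t)[i]? == some (some true))).getLast?

/-- The smallest index `j` with `t^red_j = -`, if it exists. -/
def fIdx (t : List Bool) : Option ℕ :=
  ((List.range t.length).filter (fun i => (red t)[i]? == some (some false))).head?

/-- The crystal operator `ẽ`: flip the rightmost surviving `+` to `-` (or `0` = `none`). -/
def etilde (t : List Bool) : Option (List Bool) :=
  (eIdx t).map (fun i => t.set i false)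

/-- The crystal operator `f̃`: flip the leftmost surviving `-` to `+` (or `0` = `none`). -/
def ftilde (t : List Bool) : Option (List Bool) :=
  (fIdx t).map (fun i => t.set i true)

/-- The order `≻` on `{+,-}ⁿ`: `t' ≻ t` iff there is an index `i` such that
`t'_j = t_j` for all `j > i`, while `t'_i = -` and `t_i = +`. -/
def succOrd (t' t : List Bool) : Prop :=
  ∃ i : ℕ, (∀ j, i < j → t'[j]? = t[j]?) ∧ t'[i]? = some false ∧ t[i]? = some true


/-!
Read `red` from right to left: each `-` cancels the leftmost surviving `+` to its right.
If `i` carries the rightmost surviving `+`, then every `-` left of `i` that cancels does so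
with a `+` strictly left of `i` (otherwise `i` would not survive). Turning `t_i` into `-`
therefore leaves all those cancellations intact, and the new `-` sees no surviving `+` to its
right, so it survives itself.
-/

def IsLastPlus (l : List (Option Bool)) (i : ℕ) : Prop :=
  l[i]? = some (some true) ∧ ∀ j, i < j → l[j]? ≠ some (some true)

theorem isLastPlus_cons_succ {a : Option Bool} {l : List (Option Bool)} {k : ℕ} :
    IsLastPlus (a :: l) (k + 1) ↔ IsLastPlus l k := by
  simp only [IsLastPlus, List.getElem?_cons_succ]
  refine and_congr_right fun _ => ⟨fun h j hj => h (j + 1) (by omega), fun h j hj => ?_⟩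
  obtain ⟨j, rfl⟩ := Nat.exists_eq_add_one_of_ne_zero (by omega : j ≠ 0)
  simpa using h j (by omega)

theorem length_zapPlus (l : List (Option Bool)) : (zapPlus l).length = l.length := by
  induction l with
  | nil => rfl
  | cons a l ih => rcases a with _ | _ | _ <;> simp [zapPlus, ih]

theorem length_red (t : List Bool) : (red t).length = t.length := by
  induction t with
  | nil => rfl
  | cons x s ih => cases x <;> simp only [red] <;> split_ifs <;> simp [length_zapPlus, ih]

theorem red_cons_true (s : List Bool) : red (true :: s) = some true :: red s := rfl

theorem red_cons_false_of_mem {s : List Bool} (h : some true ∈ red s) :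
    red (false :: s) = none :: zapPlus (red s) := by
  simp [red, h]

theorem red_cons_false_of_not_mem {s : List Bool} (h : some true ∉ red s) :
    red (false :: s) = some false :: red s := by
  simp [red, h]

theorem getElem?_zapPlus_of_lt {l : List (Option Bool)} {k : ℕ}
    (h : (zapPlus l)[k]? = some (some true)) {j : ℕ} (hj : k < j) :
    (zapPlus l)[j]? = l[j]? := by
  induction l generalizing k j with
  | nil => simp [zapPlus] at h
  | cons a l ih =>
    obtain ⟨j, rfl⟩ := Nat.exists_eq_add_one_of_ne_zero (by omega : j ≠ 0)
    rcases a with _ | _ | _ <;> cases k <;> simp_all [zapPlus] <;> exact ih h hj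

theorem getElem?_of_getElem?_zapPlus {l : List (Option Bool)} {k : ℕ}
    (h : (zapPlus l)[k]? = some (some true)) : l[k]? = some (some true) := by
  induction l generalizing k with
  | nil => simp [zapPlus] at h
  | cons a l ih => rcases a with _ | _ | _ <;> cases k <;> simp_all [zapPlus]

theorem isLastPlus_of_isLastPlus_zapPlus {l : List (Option Bool)} {k : ℕ}
    (h : IsLastPlus (zapPlus l) k) : IsLastPlus l k :=
  ⟨getElem?_of_getElem?_zapPlus h.1, fun j hj => getElem?_zapPlus_of_lt h.1 hj ▸ h.2 j hj⟩

theorem mem_set_of_getElem?_zapPlus {l : List (Option Bool)} {k : ℕ}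
    (h : (zapPlus l)[k]? = some (some true)) : some true ∈ l.set k (some false) := by
  induction l generalizing k with
  | nil => simp [zapPlus] at h
  | cons a l ih =>
    rcases a with _ | _ | _ <;> cases k <;> simp_all [zapPlus]

theorem zapPlus_set {l : List (Option Bool)} {k : ℕ}
    (h : (zapPlus l)[k]? = some (some true)) :
    zapPlus (l.set k (some false)) = (zapPlus l).set k (some false) := by
  induction l generalizing k with
  | nil => simp [zapPlus] at h
  | cons a l ih => rcases a with _ | _ | _ <;> cases k <;> simp_all [zapPlus]

theorem red_set_of_isLastPlus {t : List Bool} {i : ℕ} (h : IsLastPlus (red t) i) :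
    red (t.set i false) = (red t).set i (some false) := by
  induction t generalizing i with
  | nil => simp [IsLastPlus, red] at h
  | cons x s ih =>
    cases x with
    | true =>
      cases i with
      | zero =>
        have hs : some true ∉ red s := fun hmem => by
          obtain ⟨k, hk⟩ := List.mem_iff_getElem?.mp hmem
          exact h.2 (k + 1) (by omega) (by simpa [red_cons_true] using hk)
        simp [red_cons_false_of_not_mem hs, red_cons_true]
      | succ k =>
        rw [red_cons_true, isLastPlus_cons_succ] at h
        simp [red_cons_true, ih h]
    | false =>
      by_cases hs : some true ∈ red s
      · rw [red_cons_false_of_mem hs] at h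
        cases i with
        | zero => simp [IsLastPlus] at h
        | succ k =>
          rw [isLastPlus_cons_succ] at h
          have hk := isLastPlus_of_isLastPlus_zapPlus h
          have hs' : some true ∈ red (s.set k false) := ih hk ▸ mem_set_of_getElem?_zapPlus h.1
          simp [red_cons_false_of_mem hs, red_cons_false_of_mem hs', ih hk, zapPlus_set h.1]
      · rw [red_cons_false_of_not_mem hs] at h
        cases i with
        | zero => simp [IsLastPlus] at h
        | succ k => exact absurd (List.mem_of_getElem? (isLastPlus_cons_succ.1 h).1) hs

theorem isLastPlus_of_eIdx {t : List Bool} {i : ℕ} (hi : eIdx t = some i) :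
    IsLastPlus (red t) i := by
  obtain ⟨ys, hys⟩ := List.getLast?_eq_some_iff.1 hi
  have hsorted := hys ▸ List.pairwise_lt_range.filter _
  have hmem : i ∈ ys ++ [i] := by simp
  rw [← hys, List.mem_filter] at hmem
  refine ⟨by simpa using hmem.2, fun j hij hj => ?_⟩
  have hj : j ∈ ys ++ [i] := by
    rw [← hys, List.mem_filter, List.mem_range, ← length_red]
    exact ⟨(List.getElem?_eq_some_iff.1 hj).1, by simp [hj]⟩
  rcases List.mem_append.1 hj with hj | hj
  · exact absurd ((List.pairwise_append.1 hsorted).2.2 j hj i (by simp)) (by omega)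
  · rw [List.mem_singleton] at hj; omega

/-- If `ẽt ≠ 0` and `i` is the largest index with `t^red_i = +`, then the reduced form
of `ẽt` agrees with `t^red` except that position `i` changes from `+` to `-`;
consequently `h₊(ẽt) = h₊(t) - 1` and `h₋(ẽt) = h₋(t) + 1`. -/
theorem red_etilde (t t' : List Bool) (i : ℕ) (hi : eIdx t = some i)
    (ht' : etilde t = some t') :
    red t' = (red t).set i (some false) ∧ hp t' = hp t - 1 ∧ hm t' = hm t + 1 := by
  obtain rfl : t.set i false = t' := by simpa [etilde, hi] using ht'
  have hlast := isLastPlus_of_eIdx hi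
  have hred := red_set_of_isLastPlus hlast
  obtain ⟨hlt, hplus⟩ := List.getElem?_eq_some_iff.1 hlast.1
  refine ⟨hred, ?_, ?_⟩ <;> simp [hp, hm, hred, List.count_set hlt, hplus]
end

section
/- Let t ∈ {+,-}^n and let l be an index with h₋^l(t) > h₋^{l+1}(t) (so t_l = - and this - survives in the reduced form of (t_l,...,t_n)). Let t̄ be obtained from t by changing position l from - to +. List the sequences t¹ ≺ t² ≺ ... ≺ t^N obtained from t̄ by changing one + to a - (ordered so that t^N ≻ ... ≻ t¹ in the order: t' ≻ t if there is i with t_j = t'_j for j > i, t'_i = -, t_i = +), and let j be such that t^j = t. Then: (1) h₋^{l+1}(t^j) + 1 = h₋^l(t^j); (2) h₋^{l+1}(t^i) = h₋^{l+1}(t^j) for all i < j; (3) h₋^{l+1}(t^i) ≥ h₋^l(t^j) + 1 for all i > j. -/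
/-!
Write `u` for the tail `(t_{l+1}, …, t_n)`. Prepending a `-` to `u` adds a `-` to the reduced
form exactly when `u^red` contains no `+`, so the hypothesis says `h₊(u) = 0`, which is (1).
Moving the `-` of `t` from position `l` to a position `p` gives a sequence `≺ t` only if
`p ≤ l`, and then the tail `u` is untouched, which is (2); it gives a sequence `≻ t` only if
`p > l`, and then the new tail is `u` with one `+` turned into a `-`. Every sign contributes
`±1` to the weight `h₋ - h₊` whatever cancels, so the new tail has
`h₋ ≥ wt(u) + 2 = h₋(u) + 2`, which is (3).
-/

lemma count_some_false_zapPlus (r : List (Option Bool)) :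
    (zapPlus r).count (some false) = r.count (some false) := by
  induction r with
  | nil => rfl
  | cons y r ih => rcases y with _ | _ | _ <;> simp [zapPlus, ih]

lemma count_some_true_zapPlus {r : List (Option Bool)} (h : some true ∈ r) :
    (zapPlus r).count (some true) + 1 = r.count (some true) := by
  induction r with
  | nil => simp at h
  | cons y r ih =>
    rcases y with _ | _ | _
    all_goals simp_all [zapPlus]

lemma red_any_iff_hp_ne_zero (s : List Bool) :
    (red s).any (· == some true) = true ↔ hp s ≠ 0 := by
  simp [hp, List.count_eq_zero]

lemma hp_cons_true (s : List Bool) : hp (true :: s) = hp s + 1 := by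
  simp [hp, red]

lemma hm_cons_true (s : List Bool) : hm (true :: s) = hm s := by
  simp [hm, red]

lemma hm_cons_false_of_hp_ne_zero {s : List Bool} (h : hp s ≠ 0) : hm (false :: s) = hm s := by
  simp [hm, red, (red_any_iff_hp_ne_zero s).2 h, count_some_false_zapPlus]

lemma hm_cons_false_of_hp_eq_zero {s : List Bool} (h : hp s = 0) :
    hm (false :: s) = hm s + 1 := by
  simp [hm, red, mt (red_any_iff_hp_ne_zero s).1 (not_not.2 h)]

lemma hp_cons_false_of_hp_ne_zero {s : List Bool} (h : hp s ≠ 0) :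
    hp (false :: s) + 1 = hp s := by
  have hmem : some true ∈ red s := List.count_pos_iff.1 (Nat.pos_of_ne_zero h)
  simp [hp, red, (red_any_iff_hp_ne_zero s).2 h, count_some_true_zapPlus hmem]

lemma hp_cons_false_of_hp_eq_zero {s : List Bool} (h : hp s = 0) : hp (false :: s) = 0 := by
  simpa [hp, red, mt (red_any_iff_hp_ne_zero s).1 (not_not.2 h)] using h

lemma hp_eq_zero_of_hm_lt_hm_cons_false {s : List Bool} (h : hm s < hm (false :: s)) :
    hp s = 0 := by
  by_contra hs
  rw [hm_cons_false_of_hp_ne_zero hs] at h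
  exact lt_irrefl _ h

lemma wt_cons_true (s : List Bool) : wt (true :: s) = wt s - 1 := by
  simp only [wt, hp_cons_true, hm_cons_true]
  push_cast
  ring

lemma wt_cons_false (s : List Bool) : wt (false :: s) = wt s + 1 := by
  unfold wt
  by_cases h : hp s = 0
  · rw [hm_cons_false_of_hp_eq_zero h, hp_cons_false_of_hp_eq_zero h, h]
    push_cast
    ring
  · have := hp_cons_false_of_hp_ne_zero h
    rw [hm_cons_false_of_hp_ne_zero h]
    omega

lemma wt_set_false {u : List Bool} {q : ℕ} (h : u[q]? = some true) :
    wt (u.set q false) = wt u + 2 := by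
  induction u generalizing q with
  | nil => simp at h
  | cons a u ih =>
    rcases q with _ | q
    · obtain rfl : a = true := by simpa using h
      rw [List.set_cons_zero, wt_cons_false, wt_cons_true]
      ring
    · have hu : u[q]? = some true := by simpa using h
      rcases a
      · rw [List.set_cons_succ, wt_cons_false, wt_cons_false, ih hu]; ring
      · rw [List.set_cons_succ, wt_cons_true, wt_cons_true, ih hu]; ring

lemma hm_add_two_le_hm_set_false {u : List Bool} {q : ℕ} (hu : hp u = 0)
    (h : u[q]? = some true) : hm u + 2 ≤ hm (u.set q false) := by
  have := wt_set_false h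
  unfold wt at this
  omega

lemma not_succOrd_self (x : List Bool) : ¬ succOrd x x := by
  rintro ⟨i, -, hx, hx'⟩
  simp [hx] at hx'

lemma succOrd.getElem?_of_eq_off {x y : List Bool} {a b : ℕ} (h : succOrd x y) (hab : a < b)
    (hxy : ∀ j, j ≠ a → j ≠ b → x[j]? = y[j]?) (hb : x[b]? ≠ y[b]?) :
    x[b]? = some false ∧ y[b]? = some true := by
  obtain ⟨i, habove, hxi, hyi⟩ := h
  obtain hib | rfl | hbi := lt_trichotomy i b
  · exact absurd (habove b hib) hb
  · exact ⟨hxi, hyi⟩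
  · have := hxy i (by omega) (by omega)
    simp [hxi, hyi] at this

section MoveMinus

variable {t : List Bool} {l p : ℕ}

lemma getElem?_set_set_of_ne {j : ℕ} (hjl : j ≠ l) (hjp : j ≠ p) :
    ((t.set l true).set p false)[j]? = t[j]? := by
  rw [List.getElem?_set_ne (Ne.symm hjp), List.getElem?_set_ne (Ne.symm hjl)]

lemma le_of_succOrd_set_set (hset : (t.set l true)[p]? = some true)
    (h : succOrd t ((t.set l true).set p false)) : p ≤ l := by
  by_contra! hlp
  have htp : t[p]? = some true := by rwa [List.getElem?_set_ne hlp.ne] at hset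
  have hyp : ((t.set l true).set p false)[p]? = some false :=
    List.getElem?_set_self (List.getElem?_eq_some_iff.1 hset).1
  have := (h.getElem?_of_eq_off hlp (fun j hjl hjp => (getElem?_set_set_of_ne hjl hjp).symm)
    (by simp [htp, hyp])).1
  simp [htp] at this

lemma lt_of_set_set_succOrd (htl : t[l]? = some false)
    (h : succOrd ((t.set l true).set p false) t) : l < p := by
  obtain ⟨hlt, htl'⟩ := List.getElem?_eq_some_iff.1 htl
  obtain hpl | rfl | hlp := lt_trichotomy p l
  · have hyl : ((t.set l true).set p false)[l]? = some true := by
      rw [List.getElem?_set_ne hpl.ne, List.getElem?_set_self hlt]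
    have := (h.getElem?_of_eq_off hpl (fun j hjp hjl => getElem?_set_set_of_ne hjl hjp)
      (by simp [hyl, htl])).1
    simp [hyl] at this
  · rw [List.set_set, ← htl', List.set_getElem_self] at h
    exact absurd h (not_succOrd_self t)
  · exact hlp

end MoveMinus

-- Indices are `0`-based: `h₋^{l+1}(t)` is `hm (t.drop (l + 1))`.
theorem comb_lemma_general (n : ℕ) (t : List Bool) (l : ℕ)
    (htl : t[l]? = some false)
    (hgt : hm (t.drop (l + 1)) < hm (t.drop l)) :
    hm (t.drop (l + 1)) + 1 = hm (t.drop l) ∧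
    (∀ p, p < n → (t.set l true)[p]? = some true →
      succOrd t ((t.set l true).set p false) →
      hm (((t.set l true).set p false).drop (l + 1)) = hm (t.drop (l + 1))) ∧
    (∀ p, p < n → (t.set l true)[p]? = some true →
      succOrd ((t.set l true).set p false) t →
      hm (t.drop l) + 1 ≤ hm (((t.set l true).set p false).drop (l + 1))) := by
  obtain ⟨hlt, htl'⟩ := List.getElem?_eq_some_iff.1 htl
  have hdrop : t.drop l = false :: t.drop (l + 1) := by
    rw [List.drop_eq_getElem_cons hlt, htl']
  rw [hdrop] at hgt ⊢
  have hp0 := hp_eq_zero_of_hm_lt_hm_cons_false hgt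
  rw [hm_cons_false_of_hp_eq_zero hp0]
  refine ⟨rfl, fun p _ hset hsucc => ?_, fun p _ hset hsucc => ?_⟩
  · have hpl := le_of_succOrd_set_set hset hsucc
    rw [List.drop_set_of_lt (by omega), List.drop_set_of_lt (by omega)]
  · have hlp := lt_of_set_set_succOrd htl hsucc
    have htp : (t.drop (l + 1))[p - (l + 1)]? = some true := by
      rw [List.getElem?_drop, Nat.add_sub_cancel' hlp]
      rwa [List.getElem?_set_ne hlp.ne] at hset
    rw [List.drop_set, if_neg (by omega), List.drop_set_of_lt (by omega)]
    exact hm_add_two_le_hm_set_false hp0 htp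

/-- The key combinatorial lemma. Let `t ∈ {+,-}ⁿ` and `l` an index with
`h₋^l(t) > h₋^{l+1}(t)` (so `t_l = -`). Let `t̄` be `t` with position `l` changed to `+`,
and consider the sequences obtained from `t̄` by changing one `+` (at position `p`) to a
`-`, compared with `t` via the order `≻`. Then:
(1) `h₋^{l+1}(t) + 1 = h₋^l(t)`;
(2) any such sequence `≺ t` has the same `h₋^{l+1}` as `t`;
(3) any such sequence `≻ t` has `h₋^{l+1} ≥ h₋^l(t) + 1`.
(Indices here are `0`-based, so `h₋^{l+1}` is `hm (· .drop (l+1))` etc.) -/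
theorem comb_lemma (n : ℕ) (t : List Bool) (hlen : t.length = n) (l : ℕ) (hl : l < n)
    (htl : t[l]? = some false)
    (hgt : hm (t.drop (l + 1)) < hm (t.drop l)) :
    hm (t.drop (l + 1)) + 1 = hm (t.drop l) ∧
    (∀ p, p < n → (t.set l true)[p]? = some true →
      succOrd t ((t.set l true).set p false) →
      hm (((t.set l true).set p false).drop (l + 1)) = hm (t.drop (l + 1))) ∧
    (∀ p, p < n → (t.set l true)[p]? = some true →
      succOrd ((t.set l true).set p false) t →
      hm (t.drop l) + 1 ≤ hm (((t.set l true).set p false).drop (l + 1))) :=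
  comb_lemma_general n t l htl hgt
end

section
/- Reading the addable and removable boxes of a Young diagram λ in increasing order of content, they strictly alternate starting and ending with addable: between any two removable boxes (in content order) there is an addable box, and the boxes of minimal and maximal content in B(λ) are addable. -/
-- A Young diagram is given by row lengths `l 1 ≥ l 2 ≥ ...` (rows indexed from `1`),
-- with finitely many boxes; the box in row `a`, column `b` has content `b - a`.

/-- Row `j` has an addable box (at position `(j, l j + 1)`). -/
def addable (l : ℕ → ℕ) (j : ℕ) : Prop := 1 ≤ j ∧ (j = 1 ∨ l j < l (j - 1))

/-- Row `j` has a removable box (at position `(j, l j)`). -/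
def removable (l : ℕ → ℕ) (j : ℕ) : Prop := 1 ≤ j ∧ l (j + 1) < l j

/-- The content of the addable box of row `j`. -/
def addC (l : ℕ → ℕ) (j : ℕ) : ℤ := (l j : ℤ) + 1 - j

/-- The content of the removable box of row `j`. -/
def remC (l : ℕ → ℕ) (j : ℕ) : ℤ := (l j : ℤ) - j

/-! If row `k` ends in a removable box, then `l (k + 1) < l k`, so row `k + 1` has an addable box,
of smaller content. Since rows weakly shrink going down, the end-of-row contents strictly decrease
with the row index; hence that addable box still lies above every removable box further down, and
the addable box of row `1` lies above every removable box. -/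

section YoungDiagram

variable {l : ℕ → ℕ}

lemma addable_one : addable l 1 :=
  ⟨le_rfl, Or.inl rfl⟩

lemma addable_succ_of_removable {k : ℕ} (hk : removable l k) : addable l (k + 1) :=
  ⟨Nat.le_add_left 1 k, Or.inr hk.2⟩

lemma addC_succ_lt_remC_of_removable {k : ℕ} (hk : removable l k) : addC l (k + 1) < remC l k := by
  have := hk.2
  unfold addC remC
  push_cast
  omega

variable (hl : AntitoneOn l {x | 1 ≤ x})
include hl

lemma remC_lt_addC_of_le {a b : ℕ} (ha : 1 ≤ a) (hab : a ≤ b) : remC l b < addC l a := by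
  have := hl ha (le_trans ha hab) hab
  unfold addC remC
  omega

lemma lt_of_remC_lt_remC {j k : ℕ} (hj : 1 ≤ j) (hlt : remC l j < remC l k) : k < j := by
  by_contra! hjk
  have := hl hj (le_trans hj hjk) hjk
  unfold remC at hlt
  omega

end YoungDiagram

theorem addable_removable_alternate_general (l : ℕ → ℕ)
    (hanti : ∀ j, 1 ≤ j → l (j + 1) ≤ l j) :
    (∀ j k, removable l j → removable l k → remC l j < remC l k →
      ∃ m, addable l m ∧ remC l j < addC l m ∧ addC l m < remC l k) ∧
    (∀ j, removable l j →
      (∃ m, addable l m ∧ addC l m < remC l j) ∧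
      (∃ m, addable l m ∧ remC l j < addC l m)) := by
  have hl : AntitoneOn l {x | 1 ≤ x} := antitoneOn_nat_Ici_of_succ_le hanti
  refine ⟨fun j k hj hk hlt => ?_, fun j hj => ?_⟩
  · have hkj := lt_of_remC_lt_remC hl hj.1 hlt
    exact ⟨k + 1, addable_succ_of_removable hk,
      remC_lt_addC_of_le hl (Nat.le_add_left 1 k) hkj, addC_succ_lt_remC_of_removable hk⟩
  · exact ⟨⟨j + 1, addable_succ_of_removable hj, addC_succ_lt_remC_of_removable hj⟩,
      ⟨1, addable_one, remC_lt_addC_of_le hl le_rfl hj.1⟩⟩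

/-- Reading the addable and removable boxes of a Young diagram in increasing order of
content, they strictly alternate, starting and ending with addable: between any two
removable boxes there is an addable box, and every removable box lies strictly between
two addable boxes in content (so the boxes of minimal and maximal content in `B(λ)`
are addable). -/
theorem addable_removable_alternate (l : ℕ → ℕ)
    (hanti : ∀ j, 1 ≤ j → l (j + 1) ≤ l j) (hfin : ∃ N, 1 ≤ N ∧ l N = 0) :
    (∀ j k, removable l j → removable l k → remC l j < remC l k →
      ∃ m, addable l m ∧ remC l j < addC l m ∧ addC l m < remC l k) ∧
    (∀ j, removable l j →
      (∃ m, addable l m ∧ addC l m < remC l j) ∧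
      (∃ m, addable l m ∧ remC l j < addC l m)) :=
  addable_removable_alternate_general l hanti
end

section
/- Let κ ∈ ℂ with exp(2πiκ) ≠ 1, s ∈ ℂ^ℓ, and define for a box x in row a, column b of component i of an ℓ-multipartition: d^p(x) := κℓ(s_i + b - a) - i - κΣ_j s_j. If x and y are two distinct boxes in B_z(λ) (the addable/removable z-boxes of λ, where a box is a z-box if exp(2πiκ(s_i + b - a)) = z), then d^p(x) - d^p(y) is a nonzero integer. -/
open Complex in
/-- The set `B_z(μ)` of addable and removable `z`-boxes of the `ℓ`-multipartition `μ`: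
triples `(i, a, b)` (component, row, column) that are addable or removable boxes of
`μ^{(i)}` and satisfy `exp(2π√-1 κ (s_i + b - a)) = z`. -/
def Bz (L : ℕ) (κ : ℂ) (s : Fin L → ℂ) (z : ℂ) (μ : Fin L → ℕ → ℕ) :
    Set (Fin L × ℕ × ℕ) :=
  {x | ((addable (μ x.1) x.2.1 ∧ x.2.2 = μ x.1 x.2.1 + 1) ∨
        (removable (μ x.1) x.2.1 ∧ x.2.2 = μ x.1 x.2.1)) ∧
       Complex.exp (2 * Real.pi * Complex.I * κ * (s x.1 + (x.2.2 : ℂ) - (x.2.1 : ℂ))) = z}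

open scoped BigOperators in
/-- The function `d^p(x) = κ ℓ (s_i + b - a) - i - κ Σ_j s_j` for a box `x = (i, a, b)`. -/
noncomputable def dP (L : ℕ) (κ : ℂ) (s : Fin L → ℂ) (x : Fin L × ℕ × ℕ) : ℂ :=
  κ * L * (s x.1 + (x.2.2 : ℂ) - (x.2.1 : ℂ)) - ((x.1 : ℕ) : ℂ) - κ * ∑ j, s j

/-!
Equality of the two exponentials gives `κ (cont^s x - cont^s y) = n ∈ ℤ`, so
`d^p(x) - d^p(y) = ℓ n - i + j` for the components `i, j < ℓ` of `x, y`. If this vanishes,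
then `ℓ ∣ i - j` forces `i = j` and `n = 0`; as `κ ≠ 0`, the boxes `x, y` then lie in the same
component with the same content. But, the row lengths being weakly decreasing, distinct
addable or removable boxes of a Young diagram have distinct contents.
-/

def IsAddableOrRemovableBox (l : ℕ → ℕ) (a b : ℕ) : Prop :=
  (addable l a ∧ b = l a + 1) ∨ (removable l a ∧ b = l a)

theorem IsAddableOrRemovableBox.eq_of_content_eq {l : ℕ → ℕ}
    (hl : ∀ j, 1 ≤ j → l (j + 1) ≤ l j) {a b a' b' : ℕ}
    (hx : IsAddableOrRemovableBox l a b) (hy : IsAddableOrRemovableBox l a' b')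
    (hc : (b : ℤ) - a = b' - a') : a = a' ∧ b = b' := by
  wlog hle : a ≤ a' generalizing a b a' b'
  · obtain ⟨ha, hb⟩ := this hy hx hc.symm (le_of_not_ge hle)
    exact ⟨ha.symm, hb.symm⟩
  unfold IsAddableOrRemovableBox addable removable at hx hy
  have ha : 1 ≤ a := hx.elim (·.1.1) (·.1.1)
  have hanti : AntitoneOn l {j | 1 ≤ j} := antitoneOn_nat_Ici_of_succ_le hl
  rcases hle.eq_or_lt with rfl | hlt
  · omega
  · have h₀ : l a' ≤ l a := hanti ha (by simp; omega) hle
    have h₁ : l a' ≤ l (a + 1) := hanti (by simp) (by simp; omega) hlt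
    omega

noncomputable def shiftedContent {L : ℕ} (s : Fin L → ℂ) (x : Fin L × ℕ × ℕ) : ℂ :=
  s x.1 + (x.2.2 : ℂ) - (x.2.1 : ℂ)

theorem shiftedContent_eq_iff {L : ℕ} (s : Fin L → ℂ) {x y : Fin L × ℕ × ℕ} (h : x.1 = y.1) :
    shiftedContent s x = shiftedContent s y ↔ (x.2.2 : ℤ) - x.2.1 = y.2.2 - y.2.1 := by
  rw [shiftedContent, shiftedContent, h, add_sub_assoc, add_sub_assoc, add_right_inj]
  exact_mod_cast Iff.rfl

theorem dP_sub_dP (L : ℕ) (κ : ℂ) (s : Fin L → ℂ) (x y : Fin L × ℕ × ℕ) :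
    dP L κ s x - dP L κ s y =
      L * (κ * shiftedContent s x - κ * shiftedContent s y) - ((x.1 : ℕ) : ℂ) + ((y.1 : ℕ) : ℂ) := by
  simp only [dP, shiftedContent]
  ring

theorem Complex.exists_int_sub_eq_of_exp_eq {u v : ℂ}
    (h : exp (2 * Real.pi * I * u) = exp (2 * Real.pi * I * v)) : ∃ n : ℤ, u - v = n := by
  obtain ⟨n, hn⟩ := exp_eq_exp_iff_exists_int.mp h
  refine ⟨n, mul_left_cancel₀ (by simp [Real.pi_ne_zero] : 2 * (Real.pi : ℂ) * I ≠ 0) ?_⟩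
  linear_combination hn

theorem Fin.eq_and_eq_zero_of_mul_sub_add_eq_zero {L : ℕ} {i j : Fin L} {n : ℤ}
    (h : (L : ℤ) * n - i + j = 0) : i = j ∧ n = 0 := by
  have hij : (i : ℤ) - j = 0 :=
    Int.eq_zero_of_abs_lt_dvd (m := L) ⟨n, by linarith⟩ (by rw [abs_lt]; omega)
  refine ⟨Fin.ext (by omega), ?_⟩
  have hL : (L : ℤ) ≠ 0 := by have := i.pos; omega
  exact (mul_eq_zero.mp (by linarith)).resolve_left hL

/-- If `exp(2πiκ) ≠ 1` and `x ≠ y` are two distinct boxes in `B_z(λ)`, then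
`d^p(x) - d^p(y)` is a nonzero integer. -/
theorem dP_diff_nonzero_integer (L : ℕ) (κ : ℂ)
    (hκ : Complex.exp (2 * Real.pi * Complex.I * κ) ≠ 1)
    (s : Fin L → ℂ) (z : ℂ) (lam : Fin L → ℕ → ℕ)
    (hY : ∀ i, (∀ j, 1 ≤ j → lam i (j + 1) ≤ lam i j) ∧ ∃ N, 1 ≤ N ∧ lam i N = 0)
    (x y : Fin L × ℕ × ℕ) (hx : x ∈ Bz L κ s z lam) (hy : y ∈ Bz L κ s z lam)
    (hxy : x ≠ y) :
    ∃ m : ℤ, m ≠ 0 ∧ dP L κ s x - dP L κ s y = (m : ℂ) := by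
  obtain ⟨hbx, hex⟩ := hx
  obtain ⟨hby, hey⟩ := hy
  obtain ⟨n, hn⟩ := Complex.exists_int_sub_eq_of_exp_eq
    (u := κ * shiftedContent s x) (v := κ * shiftedContent s y)
    (by rw [← mul_assoc, ← mul_assoc]; exact hex.trans hey.symm)
  refine ⟨L * n - (x.1 : ℕ) + (y.1 : ℕ), fun hm ↦ hxy ?_, by rw [dP_sub_dP, hn]; push_cast; ring⟩
  obtain ⟨hi, rfl⟩ := Fin.eq_and_eq_zero_of_mul_sub_add_eq_zero hm
  have hκ0 : κ ≠ 0 := by rintro rfl; simp at hκ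
  have hc : shiftedContent s x = shiftedContent s y := by
    rw [← mul_sub, Int.cast_zero, mul_eq_zero, sub_eq_zero] at hn
    exact hn.resolve_left hκ0
  obtain ⟨ha, hb⟩ := IsAddableOrRemovableBox.eq_of_content_eq (hY y.1).1
    (hi ▸ hbx) hby ((shiftedContent_eq_iff s hi).mp hc)
  exact Prod.ext hi (Prod.ext ha hb)
end
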